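/- Let γ > 0, and set Q(z) = e^{-1/(2z)}·√(z/(1−z)) and K(z) = −(1/γ)·√((1−z)/z³)·(2z−1)·e^{1/(2z)} + (√(2πe)/γ)·erfi(√((1−z)/(2z))) with erfi(x) = (2/√π)∫_0^x e^{t²} dt. Then for every 0 < a < 1 the function z ↦ Q(z)K(z) is integrable on (a,1), while for every 0 < b < 1, ∫_ε^b Q(z)K(z) dz → +∞ as ε → 0⁺. -/

import Mathlib

open MeasureTheory

/-- The imaginary error function erfi(x) = (2/√π)∫_0^x e^{t²} dt. -/
noncomputable def erfi (x : ℝ) : ℝ :=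
  (2 / Real.sqrt Real.pi) * ∫ t in (0 : ℝ)..x, Real.exp (t ^ 2)

/-- Optimal homodyne scale density Q(z) = e^{-1/(2z)}·√(z/(1−z)). -/
noncomputable def Qhom (z : ℝ) : ℝ :=
  Real.exp (-1 / (2 * z)) * Real.sqrt (z / (1 - z))

/-- Optimal homodyne function
K(z) = −(1/γ)√((1−z)/z³)(2z−1)e^{1/(2z)} + (√(2πe)/γ)erfi(√((1−z)/(2z))). -/
noncomputable def Khom (γ z : ℝ) : ℝ :=
  -(1 / γ) * Real.sqrt ((1 - z) / z ^ 3) * (2 * z - 1) * Real.exp (1 / (2 * z))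
    + (Real.sqrt (2 * Real.pi * Real.exp 1) / γ) *
        erfi (Real.sqrt ((1 - z) / (2 * z)))


/-!
Writing `s = √((1 - z) / (2z))`, the first summand of `K` cancels the Gaussian factor of `Q`
exactly and `Q K = (1 - 2z)/(γz) + (√(2πe)/γ) Q erfi s`. The bound `erfi s ≤ (2/√π) s e^{s²}`
makes the second term lie in `[0, 2/γ]`, so `1/(γz) - 2/γ ≤ Q K ≤ 1/(γz)` on `(0, 1)`. Hence
`|Q K| ≤ 1/(γa)` on `(a, 1)`, while `∫_ε^b Q K ≥ (log (b/ε) - 2b)/γ → ∞`.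
-/

open Real Filter Topology Set

@[fun_prop]
lemma continuous_erfi : Continuous erfi :=
  continuous_const.mul <| intervalIntegral.continuous_primitive
    (fun _ _ => (continuous_exp.comp (continuous_pow 2)).intervalIntegrable _ _) 0

lemma erfi_nonneg {x : ℝ} (hx : 0 ≤ x) : 0 ≤ erfi x :=
  mul_nonneg (by positivity) (intervalIntegral.integral_nonneg hx fun _ _ => (exp_pos _).le)

lemma erfi_le_mul_exp_sq {x : ℝ} (hx : 0 ≤ x) : erfi x ≤ 2 / √π * (x * exp (x ^ 2)) := by
  refine mul_le_mul_of_nonneg_left ?_ (by positivity)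
  calc ∫ t in (0 : ℝ)..x, exp (t ^ 2)
      ≤ ∫ _ in (0 : ℝ)..x, exp (x ^ 2) :=
        intervalIntegral.integral_mono_on hx
          ((continuous_exp.comp (continuous_pow 2)).intervalIntegrable 0 x)
          intervalIntegrable_const fun t ht => exp_le_exp.2 (pow_le_pow_left₀ ht.1 ht.2 2)
    _ = x * exp (x ^ 2) := by simp

lemma continuousOn_Qhom_mul_Khom (γ : ℝ) :
    ContinuousOn (fun z => Qhom z * Khom γ z) (Ioo 0 1) := by
  unfold Qhom Khom
  fun_prop (disch := rintro z ⟨hz0, hz1⟩; first | positivity | exact (sub_pos.2 hz1).ne')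

lemma Qhom_nonneg (z : ℝ) : 0 ≤ Qhom z := by
  unfold Qhom; positivity

lemma Qhom_mul_Khom_eq {γ z : ℝ} (hz0 : 0 < z) (hz1 : z < 1) :
    Qhom z * Khom γ z = (1 - 2 * z) / (γ * z)
      + √(2 * π * exp 1) / γ * (Qhom z * erfi √((1 - z) / (2 * z))) := by
  have h1z : 0 < 1 - z := sub_pos.2 hz1
  have hexp : exp (-1 / (2 * z)) * exp (1 / (2 * z)) = 1 := by
    rw [← exp_add, neg_div, neg_add_cancel, exp_zero]
  have hsqrt : √(z / (1 - z)) * √((1 - z) / z ^ 3) = 1 / z := by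
    rw [← sqrt_mul (by positivity), show z / (1 - z) * ((1 - z) / z ^ 3) = (1 / z) ^ 2 by
      field_simp]
    exact sqrt_sq (by positivity)
  unfold Khom
  rw [mul_add]
  congr 1
  · calc Qhom z * (-(1 / γ) * √((1 - z) / z ^ 3) * (2 * z - 1) * exp (1 / (2 * z)))
        = -(1 / γ) * (2 * z - 1) * ((exp (-1 / (2 * z)) * exp (1 / (2 * z))) *
            (√(z / (1 - z)) * √((1 - z) / z ^ 3))) := by unfold Qhom; ring
      _ = (1 - 2 * z) / (γ * z) := by rw [hexp, hsqrt]; field_simp; ring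
  · ring

-- With `s = √((1 - z) / (2z))` the Gaussian factors cancel: `Q(z) s e^{s²} = √(1/2) e^{-1/2}`.
lemma Qhom_mul_erfi_le {z : ℝ} (hz0 : 0 < z) (hz1 : z < 1) :
    Qhom z * erfi √((1 - z) / (2 * z)) ≤ 2 / √(2 * π * exp 1) := by
  have h1z : 0 < 1 - z := sub_pos.2 hz1
  set s := √((1 - z) / (2 * z)) with hs
  have hs2 : s ^ 2 = (1 - z) / (2 * z) := sq_sqrt (by positivity)
  have hexp : exp (-1 / (2 * z)) * exp (s ^ 2) = (√(exp 1))⁻¹ := by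
    rw [hs2, ← exp_add, ← exp_half, ← exp_neg]
    congr 1; field_simp; ring
  have hsqrt : √(z / (1 - z)) * s = (√2)⁻¹ := by
    rw [hs, ← sqrt_mul (by positivity), ← sqrt_inv]
    congr 1; field_simp
  calc Qhom z * erfi s ≤ Qhom z * (2 / √π * (s * exp (s ^ 2))) :=
        mul_le_mul_of_nonneg_left (erfi_le_mul_exp_sq (sqrt_nonneg _)) (Qhom_nonneg z)
    _ = 2 / √π * (√(z / (1 - z)) * s) * (exp (-1 / (2 * z)) * exp (s ^ 2)) := by
        unfold Qhom; ring
    _ = 2 / √(2 * π * exp 1) := by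
        rw [hexp, hsqrt, sqrt_mul (by positivity), sqrt_mul zero_le_two]
        field_simp

lemma Qhom_mul_Khom_mem_Icc {γ z : ℝ} (hγ : 0 < γ) (hz0 : 0 < z) (hz1 : z < 1) :
    Qhom z * Khom γ z ∈ Icc (1 / (γ * z) - 2 / γ) (1 / (γ * z)) := by
  have hlow : 0 ≤ Qhom z * erfi √((1 - z) / (2 * z)) :=
    mul_nonneg (Qhom_nonneg z) (erfi_nonneg (sqrt_nonneg _))
  have hup := Qhom_mul_erfi_le hz0 hz1
  have hc : 0 < √(2 * π * exp 1) := by positivity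
  have hsplit : (1 - 2 * z) / (γ * z) = 1 / (γ * z) - 2 / γ := by field_simp
  rw [Qhom_mul_Khom_eq hz0 hz1, hsplit]
  constructor
  · have := mul_nonneg (div_pos hc hγ).le hlow
    linarith
  · have := mul_le_mul_of_nonneg_left hup (div_pos hc hγ).le
    rw [show √(2 * π * exp 1) / γ * (2 / √(2 * π * exp 1)) = 2 / γ by field_simp] at this
    linarith

lemma abs_Qhom_mul_Khom_le {γ z : ℝ} (hγ : 0 < γ) (hz0 : 0 < z) (hz1 : z < 1) :
    |Qhom z * Khom γ z| ≤ 1 / (γ * z) := by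
  obtain ⟨hlow, hup⟩ := Qhom_mul_Khom_mem_Icc hγ hz0 hz1
  have hγz : 1 / γ ≤ 1 / (γ * z) :=
    one_div_le_one_div_of_le (by positivity) (mul_le_of_le_one_right hγ.le hz1.le)
  have htwo : 2 / γ = 1 / γ + 1 / γ := by ring
  exact abs_le.2 ⟨by linarith, hup⟩

lemma tendsto_integral_div_sub_const_atTop {c : ℝ} (hc : 0 < c) (d : ℝ) {b : ℝ} (hb : 0 < b) :
    Tendsto (fun ε => ∫ z in ε..b, (c / z - d)) (𝓝[>] 0) atTop := by
  have hlog : Tendsto (fun ε => c * (log b - log ε)) (𝓝[>] 0) atTop :=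
    (tendsto_atTop_add_const_left _ _ (tendsto_neg_atBot_atTop.comp tendsto_log_nhdsGT_zero)
      ).const_mul_atTop hc
  have hlin : Tendsto (fun ε => -(d * (b - ε))) (𝓝[>] 0) (𝓝 (-(d * (b - 0)))) :=
    ((continuous_const.mul (continuous_const.sub continuous_id)).neg.tendsto 0).mono_left
      nhdsWithin_le_nhds
  refine (hlog.atTop_add hlin).congr' ?_
  filter_upwards [self_mem_nhdsWithin] with ε (hε : 0 < ε)
  simp only [div_eq_mul_inv c]
  have hinv : IntervalIntegrable (fun z : ℝ => z⁻¹) volume ε b :=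
    intervalIntegrable_inv_iff.2 (.inr (notMem_uIcc_of_lt hε hb))
  rw [intervalIntegral.integral_sub (hinv.const_mul c) intervalIntegrable_const,
    intervalIntegral.integral_const_mul, integral_inv_of_pos hε hb,
    intervalIntegral.integral_const, log_div hb.ne' hε.ne', smul_eq_mul]
  ring

lemma integrableOn_Qhom_mul_Khom {γ a : ℝ} (hγ : 0 < γ) (ha : 0 < a) :
    IntegrableOn (fun z => Qhom z * Khom γ z) (Ioo a 1) := by
  refine IntegrableOn.of_bound measure_Ioo_lt_top
    (((continuousOn_Qhom_mul_Khom γ).mono (Ioo_subset_Ioo_left ha.le)).aestronglyMeasurable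
      measurableSet_Ioo) (1 / (γ * a)) ?_
  filter_upwards [ae_restrict_mem measurableSet_Ioo] with z ⟨haz, hz1⟩
  have hz0 := ha.trans haz
  calc ‖Qhom z * Khom γ z‖ ≤ 1 / (γ * z) := abs_Qhom_mul_Khom_le hγ hz0 hz1
    _ ≤ 1 / (γ * a) := one_div_le_one_div_of_le (by positivity) (by gcongr)

lemma tendsto_integral_Qhom_mul_Khom_atTop {γ b : ℝ} (hγ : 0 < γ) (hb : 0 < b) (hb1 : b < 1) :
    Tendsto (fun ε => ∫ z in ε..b, Qhom z * Khom γ z) (𝓝[>] 0) atTop := by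
  refine tendsto_atTop_mono' _ ?_
    (tendsto_integral_div_sub_const_atTop (one_div_pos.2 hγ) (2 / γ) hb)
  filter_upwards [Ioo_mem_nhdsGT hb] with ε ⟨hε, hεb⟩
  have hsub : uIcc ε b ⊆ Ioo 0 1 := by
    rw [uIcc_of_le hεb.le]
    exact Icc_subset_Ioo hε hb1
  refine intervalIntegral.integral_mono_on hεb.le ?_
    (((continuousOn_Qhom_mul_Khom γ).mono hsub).intervalIntegrable) fun z ⟨hεz, hzb⟩ => ?_
  · exact ((continuousOn_const.div continuousOn_id fun z hz => (hsub hz).1.ne').sub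
      continuousOn_const).intervalIntegrable
  · rw [div_div]
    exact (Qhom_mul_Khom_mem_Icc hγ (hε.trans_le hεz) (hzb.trans_lt hb1)).1

/-- For optimal homodyne detection, R(a,1) < ∞ while R(0,b) = ∞: Q·K is
integrable on (a,1) for every 0 < a < 1, but its integral diverges at 0. -/
theorem hom_QK_integrability (γ : ℝ) (hγ : 0 < γ) :
    (∀ a : ℝ, 0 < a → a < 1 →
      IntegrableOn (fun z => Qhom z * Khom γ z) (Set.Ioo a 1)) ∧
    (∀ b : ℝ, 0 < b → b < 1 →
      Filter.Tendsto (fun ε => ∫ z in ε..b, Qhom z * Khom γ z)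
        (nhdsWithin 0 (Set.Ioi 0)) Filter.atTop) :=
  ⟨fun _ ha _ => integrableOn_Qhom_mul_Khom hγ ha,
    fun _ hb hb1 => tendsto_integral_Qhom_mul_Khom_atTop hγ hb hb1⟩
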